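/- arXiv:2006.04191 — 6 statements merged into one kernel-verified Lean document; each statement's English description precedes it below -/
import Mathlib

section
/- Let $X$ be an $m \times n$ matrix of distinct indeterminates over a field $k$. Then the quotient of the polynomial ring $k[x_{ij}]$ by the ideal generated by all $2\times 2$ minors of $X$ is isomorphic as a $k$-algebra to the subring $k[s_i t_j \mid 1 \le i \le m, 1 \le j \le n]$ of $k[s_1,\dots,s_m,t_1,\dots,t_n]$, via $x_{ij} \mapsto s_i t_j$. -/
open MvPolynomial

/-- The ideal generated by all 2×2 minors of a matrix. -/
def minors2 {R : Type*} [CommRing R] {α β : Type*} (M : Matrix α β R) : Ideal R :=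
  Ideal.span { p | ∃ i i' j j', p = M i j * M i' j' - M i j' * M i' j }

/-!
The map `x_{ij} ↦ s_i t_j` sends a monomial `x^d` to `s^r t^c`, where `r` and `c` are the row and
column sums of the exponent matrix `d`. Hence its kernel is spanned by the binomials `x^d - x^{d'}`
with `d` and `d'` having the same margins, and each of them lies in the ideal of 2×2 minors: if
`d_{ij} ≠ 0`, then `d'` has nonzero entries at some `(i, j')` and `(i', j)`, and trading
`x_{ij'} x_{i'j}` for `x_{ij} x_{i'j'}` modulo a minor makes `x_{ij}` a common factor of both
monomials, so we conclude by induction on `d`. The image is the algebra generated by the `s_i t_j`,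
and the first isomorphism theorem gives the result.
-/

namespace Finsupp

theorem mem_of_mapDomain_eq_zero {R α β : Type*} [Ring R] (f : α → β)
    {N : Submodule R (α →₀ R)} (hN : ∀ a b, f a = f b → single a 1 - single b 1 ∈ N)
    {x : α →₀ R} (hx : x.mapDomain f = 0) : x ∈ N := by
  classical
  rcases isEmpty_or_nonempty α with hα | hα
  · simp [Subsingleton.elim x 0]
  -- `ρ` picks a point in each fibre of `f`: `x ≡ x.mapDomain ρ` modulo `N`, and `f` is
  -- injective on the range of `ρ`.
  set ρ := Function.invFun f ∘ f
  have hfρ : f ∘ ρ = f := funext fun a => Function.invFun_eq ⟨a, rfl⟩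
  have hrepr : ∀ y : α →₀ R, y - y.mapDomain ρ ∈ N := by
    intro y
    induction y using Finsupp.induction_linear with
    | zero => simp
    | add y z hy hz =>
      rw [mapDomain_add, add_sub_add_comm]
      exact N.add_mem hy hz
    | single a r =>
      rw [mapDomain_single, show single a r - single (ρ a) r = r • (single a 1 - single (ρ a) 1)
        by simp [smul_sub]]
      exact N.smul_mem r (hN _ _ (congrFun hfρ a).symm)
  have hρ : x.mapDomain ρ = 0 := by
    have hinj : Set.InjOn f (Set.range ρ) := by
      rintro _ ⟨a, rfl⟩ _ ⟨b, rfl⟩ h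
      simp only [← Function.comp_apply (f := f), hfρ] at h
      simp [ρ, h]
    refine (disjoint_iff_inf_le.mp (lmapDomain_disjoint_ker R R f hinj)) ⟨?_, ?_⟩
    · refine (mem_supported _ _).2 fun a ha => ?_
      obtain ⟨b, -, rfl⟩ := Finset.mem_image.1 (mapDomain_support ha)
      exact ⟨b, rfl⟩
    · simp [← mapDomain_comp, hfρ, hx]
  simpa [hρ] using hrepr x

end Finsupp

theorem AddMonoidAlgebra.mem_of_mapDomain_eq_zero {R M N : Type*} [Ring R] (f : M → N)
    {I : Submodule R (AddMonoidAlgebra R M)}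
    (hI : ∀ a b, f a = f b → single a (1 : R) - single b 1 ∈ I)
    {x : AddMonoidAlgebra R M} (hx : mapDomain f x = 0) : x ∈ I := by
  have := Finsupp.mem_of_mapDomain_eq_zero f
    (N := I.comap (coeffLinearEquiv R).symm.toLinearMap) (fun a b h => by simpa using hI a b h)
    (x := x.coeff) (by simpa using congrArg coeff hx)
  simpa using this

open Finsupp
open Matrix (mvPolynomialX)

section

variable {ι κ : Type*}

noncomputable def margins (ι κ : Type*) : (ι × κ →₀ ℕ) →+ (ι ⊕ κ →₀ ℕ) :=
  mapDomain.addMonoidHom (Sum.inl ∘ Prod.fst) + mapDomain.addMonoidHom (Sum.inr ∘ Prod.snd)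

theorem margins_single (i : ι) (j : κ) :
    margins ι κ (single (i, j) 1) = single (Sum.inl i) 1 + single (Sum.inr j) 1 := by
  simp [margins]

theorem margins_inl_ne_zero_iff (d : ι × κ →₀ ℕ) (i : ι) :
    margins ι κ d (Sum.inl i) ≠ 0 ↔ ∃ j, d (i, j) ≠ 0 := by
  classical
  rw [margins, AddMonoidHom.add_apply, Finsupp.add_apply, mapDomain.addMonoidHom_apply,
    mapDomain.addMonoidHom_apply, mapDomain_of_notMem_range (f := Sum.inr ∘ Prod.snd) _ _
      (by simp), add_zero, ← Finsupp.mem_support_iff, mapDomain_support_of_subsingletonAddUnits]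
  simp

theorem margins_inr_ne_zero_iff (d : ι × κ →₀ ℕ) (j : κ) :
    margins ι κ d (Sum.inr j) ≠ 0 ↔ ∃ i, d (i, j) ≠ 0 := by
  classical
  rw [margins, AddMonoidHom.add_apply, Finsupp.add_apply, mapDomain.addMonoidHom_apply,
    mapDomain.addMonoidHom_apply, mapDomain_of_notMem_range (f := Sum.inl ∘ Prod.fst) _ _
      (by simp), zero_add, ← Finsupp.mem_support_iff, mapDomain_support_of_subsingletonAddUnits]
  simp

theorem margins_eq_zero_iff (d : ι × κ →₀ ℕ) : margins ι κ d = 0 ↔ d = 0 := by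
  simp [margins, mapDomain_apply_eq_zero_iff_of_subsingletonAddUnits]

section Minors

variable {R : Type*} [CommRing R]

theorem monomial_exchange_sub_mem_minors2 (c : ι × κ →₀ ℕ) (i i' : ι) (j j' : κ) :
    monomial (c + single (i, j') 1 + single (i', j) 1) (1 : R)
      - monomial (c + single (i, j) 1 + single (i', j') 1) 1 ∈
      minors2 (mvPolynomialX ι κ R) := by
  have hminor : (X (i, j') * X (i', j) - X (i, j) * X (i', j') : MvPolynomial (ι × κ) R) ∈
      minors2 (mvPolynomialX ι κ R) :=
    Ideal.subset_span ⟨i, i', j', j, by simp⟩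
  convert Ideal.mul_mem_left _ (monomial c 1) hminor using 1
  simp only [X, monomial_mul, mul_sub, mul_one, add_assoc]

theorem exists_single_le_monomial_sub_mem_minors2 {d : ι × κ →₀ ℕ} {i i' : ι} {j j' : κ}
    (hij' : d (i, j') ≠ 0) (hi'j : d (i', j) ≠ 0) :
    ∃ d', margins ι κ d' = margins ι κ d ∧ single (i, j) 1 ≤ d' ∧
      monomial d (1 : R) - monomial d' 1 ∈ minors2 (mvPolynomialX ι κ R) := by
  by_cases hi : i = i'
  · subst hi
    exact ⟨d, rfl, single_le_iff.2 (Nat.one_le_iff_ne_zero.2 hi'j), by simp⟩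
  by_cases hj : j = j'
  · subst hj
    exact ⟨d, rfl, single_le_iff.2 (Nat.one_le_iff_ne_zero.2 hij'), by simp⟩
  set c₁ := d - single (i, j') 1
  have hd : d = c₁ + single (i, j') 1 := (sub_add_single_one_cancel hij').symm
  have hc₁i'j : c₁ (i', j) ≠ 0 := by simpa [c₁, single_apply, Ne.symm hi] using hi'j
  set c := c₁ - single (i', j) 1
  have hc₁ : c₁ = c + single (i', j) 1 := (sub_add_single_one_cancel hc₁i'j).symm
  refine ⟨c + single (i, j) 1 + single (i', j') 1, ?_, le_add_right le_add_self, ?_⟩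
  · simp only [hd, hc₁, map_add, margins_single]
    abel
  · convert monomial_exchange_sub_mem_minors2 (R := R) c i i' j j' using 3
    rw [hd, hc₁, add_right_comm]

theorem monomial_sub_monomial_mem_minors2 {d d' : ι × κ →₀ ℕ}
    (h : margins ι κ d = margins ι κ d') :
    monomial d (1 : R) - monomial d' 1 ∈ minors2 (mvPolynomialX ι κ R) := by
  induction d using WellFoundedLT.induction generalizing d' with
  | _ d ih =>
  rcases eq_or_ne d 0 with rfl | hd
  · rw [eq_comm, map_zero, margins_eq_zero_iff] at h
    simp [h]
  obtain ⟨⟨i, j⟩, hij⟩ : ∃ p, d p ≠ 0 := by simpa [Finsupp.ext_iff] using hd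
  obtain ⟨j', hij'⟩ :=
    (margins_inl_ne_zero_iff d' i).1 (h ▸ (margins_inl_ne_zero_iff d i).2 ⟨j, hij⟩)
  obtain ⟨i', hi'j⟩ :=
    (margins_inr_ne_zero_iff d' j).1 (h ▸ (margins_inr_ne_zero_iff d j).2 ⟨i, hij⟩)
  obtain ⟨d'', hd'', hle, hmem⟩ := exists_single_le_monomial_sub_mem_minors2 (R := R) hij' hi'j
  obtain ⟨c', rfl⟩ := exists_add_of_le hle
  set c := d - single (i, j) 1
  have hd : d = single (i, j) 1 + c := by
    rw [add_comm]
    exact (sub_add_single_one_cancel hij).symm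
  have hc : c < d := hd ▸ lt_add_of_pos_left c (pos_iff_ne_zero.2 (by simp))
  have hcc' : margins ι κ c = margins ι κ c' := by
    rw [hd, ← hd'', map_add, map_add] at h
    exact add_left_cancel h
  have hstep : monomial d (1 : R) - monomial (single (i, j) 1 + c') 1 ∈
      minors2 (mvPolynomialX ι κ R) := by
    rw [hd, ← mul_one (1 : R), ← monomial_mul, ← monomial_mul, ← mul_sub]
    exact Ideal.mul_mem_left _ _ (ih c hc hcc')
  simpa using sub_mem hstep hmem

end Minors

section Segre

variable (R : Type*) [CommRing R]

noncomputable def segre (ι κ : Type*) :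
    MvPolynomial (ι × κ) R →ₐ[R] MvPolynomial (ι ⊕ κ) R :=
  AddMonoidAlgebra.mapDomainAlgHom R R (margins ι κ)

variable {R}

theorem segre_X (i : ι) (j : κ) :
    segre R ι κ (X (i, j)) = X (Sum.inl i) * X (Sum.inr j) := by
  simp [segre, X, ← single_eq_monomial, margins_single, AddMonoidAlgebra.single_mul_single]

theorem range_segre :
    (segre R ι κ).range = Algebra.adjoin R {p | ∃ i j, p = X (Sum.inl i) * X (Sum.inr j)} := by
  have : segre R ι κ = aeval fun p => X (Sum.inl p.1) * X (Sum.inr p.2) :=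
    algHom_ext fun p => by simpa using segre_X p.1 p.2
  rw [this, ← Algebra.adjoin_range_eq_range_aeval]
  congr 1
  ext
  simp [eq_comm]

theorem ker_segre : RingHom.ker (segre R ι κ) = minors2 (mvPolynomialX ι κ R) := by
  refine le_antisymm (fun p hp => ?_) (Ideal.span_le.2 ?_)
  · refine AddMonoidAlgebra.mem_of_mapDomain_eq_zero (margins ι κ)
      (I := (minors2 (mvPolynomialX ι κ R)).restrictScalars R) (fun a b h => ?_) hp
    simpa [single_eq_monomial] using monomial_sub_monomial_mem_minors2 h
  · rintro _ ⟨i, i', j, j', rfl⟩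
    simp only [SetLike.mem_coe, RingHom.mem_ker, map_sub, map_mul, Matrix.mvPolynomialX_apply,
      segre_X]
    ring

end Segre

end

theorem quotient_minors2_iso_segre_general (k : Type*) [Field k] (m n : ℕ)
    (X : Matrix (Fin m) (Fin n) (MvPolynomial (Fin m × Fin n) k))
    (hX : ∀ i j, X i j = MvPolynomial.X (i, j))
    (s : Fin m → MvPolynomial (Fin m ⊕ Fin n) k)
    (t : Fin n → MvPolynomial (Fin m ⊕ Fin n) k)
    (hs : ∀ i, s i = MvPolynomial.X (Sum.inl i))
    (ht : ∀ j, t j = MvPolynomial.X (Sum.inr j)) :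
    ∃ e : (MvPolynomial (Fin m × Fin n) k ⧸ minors2 X) ≃ₐ[k]
        (Algebra.adjoin k { p | ∃ i j, p = s i * t j }),
      ∀ i j, (e (Ideal.Quotient.mk (minors2 X) (X i j)) : MvPolynomial (Fin m ⊕ Fin n) k)
        = s i * t j := by
  obtain rfl : X = mvPolynomialX (Fin m) (Fin n) k := Matrix.ext hX
  obtain rfl : s = fun i => MvPolynomial.X (Sum.inl i) := funext hs
  obtain rfl : t = fun j => MvPolynomial.X (Sum.inr j) := funext ht
  have hker : minors2 (mvPolynomialX (Fin m) (Fin n) k) =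
      RingHom.ker (segre k (Fin m) (Fin n)).rangeRestrict :=
    ((AlgHom.ker_rangeRestrict _).trans ker_segre).symm
  refine ⟨(Ideal.quotientEquivAlgOfEq k hker).trans <|
    (Ideal.quotientKerAlgEquivOfSurjective (AlgHom.rangeRestrict_surjective _)).trans <|
      Subalgebra.equivOfEq _ _ range_segre, fun i j => ?_⟩
  simp [segre_X]

/-- The quotient of `k[x_{ij}]` by the 2×2 minors of the generic `m × n` matrix is
isomorphic as a `k`-algebra to the subalgebra `k[s_i t_j]` of `k[s, t]`, via
`x_{ij} ↦ s_i t_j`. -/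
theorem quotient_minors2_iso_segre (k : Type*) [Field k] (m n : ℕ) (hm : 1 ≤ m) (hn : 1 ≤ n)
    (X : Matrix (Fin m) (Fin n) (MvPolynomial (Fin m × Fin n) k))
    (hX : ∀ i j, X i j = MvPolynomial.X (i, j))
    (s : Fin m → MvPolynomial (Fin m ⊕ Fin n) k)
    (t : Fin n → MvPolynomial (Fin m ⊕ Fin n) k)
    (hs : ∀ i, s i = MvPolynomial.X (Sum.inl i))
    (ht : ∀ j, t j = MvPolynomial.X (Sum.inr j)) :
    ∃ e : (MvPolynomial (Fin m × Fin n) k ⧸ minors2 X) ≃ₐ[k]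
        (Algebra.adjoin k { p | ∃ i j, p = s i * t j }),
      ∀ i j, (e (Ideal.Quotient.mk (minors2 X) (X i j)) : MvPolynomial (Fin m ⊕ Fin n) k)
        = s i * t j :=
  quotient_minors2_iso_segre_general k m n X hX s t hs ht
end

section
/- The ideal generated by all $2\times 2$ minors of a generic $m \times n$ matrix of indeterminates over a field is a prime ideal of the polynomial ring in the $mn$ entries. -/
open Finsupp

theorem Finsupp.exists_eq_single_one_add {ι : Type*} {a : ι →₀ ℕ} {p : ι} (h : a p ≠ 0) :
    ∃ a₀, a = single p 1 + a₀ :=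
  exists_add_of_le (single_le_iff.mpr (Nat.one_le_iff_ne_zero.mpr h))

namespace MvPolynomial

variable {R : Type*} [CommRing R] {α β : Type*}

noncomputable def marginals : (α × β →₀ ℕ) →+ (α ⊕ β →₀ ℕ) :=
  mapDomain.addMonoidHom (Sum.inl ∘ Prod.fst) + mapDomain.addMonoidHom (Sum.inr ∘ Prod.snd)

theorem marginals_single (p : α × β) (e : ℕ) :
    marginals (single p e) = single (Sum.inl p.1) e + single (Sum.inr p.2) e := by
  simp [marginals]

theorem marginals_apply_inl_ne_zero_iff {a : α × β →₀ ℕ} {i : α} :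
    marginals a (Sum.inl i) ≠ 0 ↔ ∃ j, a (i, j) ≠ 0 := by
  classical
  constructor
  · intro h
    have hi : (Sum.inl i : α ⊕ β) ∈
        (mapDomain (Sum.inl ∘ Prod.fst : α × β → α ⊕ β) a).support := by
      simpa [marginals, mapDomain_of_notMem_range] using h
    obtain ⟨⟨i', j⟩, hp, hi'⟩ := Finset.mem_image.mp (mapDomain_support hi)
    obtain rfl : i' = i := Sum.inl_injective hi'
    exact ⟨j, Finsupp.mem_support_iff.mp hp⟩
  · rintro ⟨j, hj⟩
    obtain ⟨a₀, rfl⟩ := exists_eq_single_one_add hj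
    simp [marginals_single]

theorem marginals_apply_inr_ne_zero_iff {a : α × β →₀ ℕ} {j : β} :
    marginals a (Sum.inr j) ≠ 0 ↔ ∃ i, a (i, j) ≠ 0 := by
  classical
  constructor
  · intro h
    have hj : (Sum.inr j : α ⊕ β) ∈
        (mapDomain (Sum.inr ∘ Prod.snd : α × β → α ⊕ β) a).support := by
      simpa [marginals, mapDomain_of_notMem_range] using h
    obtain ⟨⟨i, j'⟩, hp, hj'⟩ := Finset.mem_image.mp (mapDomain_support hj)
    obtain rfl : j' = j := Sum.inr_injective hj'
    exact ⟨i, Finsupp.mem_support_iff.mp hp⟩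
  · rintro ⟨i, hi⟩
    obtain ⟨a₀, rfl⟩ := exists_eq_single_one_add hi
    simp [marginals_single]

theorem eq_zero_of_marginals_eq_zero {a : α × β →₀ ℕ} (h : marginals a = 0) : a = 0 := by
  ext p
  by_contra hp
  exact marginals_apply_inl_ne_zero_iff.mpr ⟨p.2, hp⟩ (by simp [h])

variable (R α β)

noncomputable def segreMap : MvPolynomial (α × β) R →ₐ[R] MvPolynomial (α ⊕ β) R :=
  aeval fun p => X (Sum.inl p.1) * X (Sum.inr p.2)

noncomputable def genericMinors2 : Ideal (MvPolynomial (α × β) R) :=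
  minors2 (Matrix.of fun i j => X (i, j))

variable {R α β}

theorem segreMap_monomial (a : α × β →₀ ℕ) (r : R) :
    segreMap R α β (monomial a r) = monomial (marginals a) r := by
  induction a using Finsupp.induction generalizing r with
  | zero => simp [segreMap]
  | single_add p e a _ _ ih =>
    rw [monomial_single_add, map_mul, ih, map_pow, segreMap, aeval_X, mul_pow, X_pow_eq_monomial,
      X_pow_eq_monomial, monomial_mul, monomial_mul, map_add, marginals_single, one_mul, one_mul]

local notation "mk" => Ideal.Quotient.mk (genericMinors2 R α β)

theorem mk_X_mul_X_comm (i i' : α) (j j' : β) :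
    mk (X (i, j) * X (i', j')) = mk (X (i, j') * X (i', j)) :=
  Ideal.Quotient.eq.mpr (Ideal.subset_span ⟨i, i', j, j', rfl⟩)

theorem exists_marginals_eq_and_mk_monomial_eq {b : α × β →₀ ℕ} {i : α} {j : β}
    (hi : marginals b (Sum.inl i) ≠ 0) (hj : marginals b (Sum.inr j) ≠ 0) :
    ∃ b₀, marginals b = marginals (single (i, j) 1 + b₀) ∧
      mk (monomial b 1) = mk (monomial (single (i, j) 1 + b₀) 1) := by
  by_cases hb : b (i, j) ≠ 0
  · obtain ⟨b₀, rfl⟩ := exists_eq_single_one_add hb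
    exact ⟨b₀, rfl, rfl⟩
  obtain ⟨j', hj'⟩ := marginals_apply_inl_ne_zero_iff.mp hi
  obtain ⟨i', hi'⟩ := marginals_apply_inr_ne_zero_iff.mp hj
  have hii' : i' ≠ i := by rintro rfl; exact hb hi'
  obtain ⟨b₁, rfl⟩ := exists_eq_single_one_add hj'
  have hb₁ : b₁ (i', j) ≠ 0 := by simpa [single_apply, hii'] using hi'
  obtain ⟨b₀, rfl⟩ := exists_eq_single_one_add hb₁
  refine ⟨single (i', j') 1 + b₀, ?_, ?_⟩
  · simp only [map_add, marginals_single]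
    abel
  · simp only [monomial_single_add, pow_one, ← mul_assoc, map_mul, mk_X_mul_X_comm i i' j j']

theorem mk_monomial_eq_of_marginals_eq {a b : α × β →₀ ℕ} (h : marginals a = marginals b) :
    mk (monomial a (1 : R)) = mk (monomial b 1) := by
  induction a using WellFoundedLT.induction generalizing b with | _ a ih =>
  rcases eq_or_ne a 0 with rfl | ha
  · rw [eq_zero_of_marginals_eq_zero (h.symm.trans (map_zero _))]
  obtain ⟨⟨i, j⟩, hij⟩ := Finsupp.ne_iff.mp ha
  obtain ⟨a₀, rfl⟩ := exists_eq_single_one_add hij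
  obtain ⟨b₀, hb, hmk⟩ := exists_marginals_eq_and_mk_monomial_eq (R := R) (i := i) (j := j)
    (h ▸ marginals_apply_inl_ne_zero_iff.mpr ⟨j, by simp⟩)
    (h ▸ marginals_apply_inr_ne_zero_iff.mpr ⟨i, by simp⟩)
  have hab : marginals a₀ = marginals b₀ :=
    add_left_cancel (by simpa only [map_add] using h.trans hb)
  rw [hmk, monomial_single_add, monomial_single_add, map_mul, map_mul,
    ih a₀ (lt_add_of_pos_left _ (by simp [pos_iff_ne_zero])) hab]

theorem ker_segreMap : RingHom.ker (segreMap R α β) = genericMinors2 R α β := by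
  refine le_antisymm (fun f hf => ?_) ?_
  · -- `L` sends `monomial t 1` to the class of any monomial whose exponent has marginals `t`.
    let L := (basisMonomials (α ⊕ β) R).constr R
      fun t => mk (monomial (Function.invFun (marginals : (α × β →₀ ℕ) →+ _) t) 1)
    have hL : L ∘ₗ (segreMap R α β).toLinearMap =
        (Ideal.Quotient.mkₐ R (genericMinors2 R α β)).toLinearMap :=
      (basisMonomials (α × β) R).ext fun a => by
        change L (segreMap R α β (monomial a 1)) = mk (monomial a 1)
        rw [segreMap_monomial]
        exact ((basisMonomials _ R).constr_basis R _ (marginals a)).trans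
          (mk_monomial_eq_of_marginals_eq (Function.invFun_eq ⟨a, rfl⟩))
    rw [← Ideal.Quotient.eq_zero_iff_mem]
    simpa [RingHom.mem_ker.mp hf] using (LinearMap.congr_fun hL f).symm
  · refine Ideal.span_le.mpr ?_
    rintro _ ⟨i, i', j, j', rfl⟩
    simp only [SetLike.mem_coe, RingHom.mem_ker, Matrix.of_apply, map_sub, map_mul, segreMap,
      aeval_X]
    ring

end MvPolynomial

theorem minors2_generic_isPrime_general (k : Type*) [Field k] (m n : ℕ)
    (X : Matrix (Fin m) (Fin n) (MvPolynomial (Fin m × Fin n) k))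
    (hX : ∀ i j, X i j = MvPolynomial.X (i, j)) :
    (minors2 X).IsPrime := by
  obtain rfl : X = Matrix.of fun i j => MvPolynomial.X (i, j) := Matrix.ext hX
  rw [← MvPolynomial.genericMinors2, ← MvPolynomial.ker_segreMap]
  exact RingHom.ker_isPrime _

/-- The ideal of 2×2 minors of a generic `m × n` matrix of indeterminates over a field
is a prime ideal of the polynomial ring in the `mn` entries. -/
theorem minors2_generic_isPrime (k : Type*) [Field k] (m n : ℕ) (hm : 1 ≤ m) (hn : 1 ≤ n)
    (X : Matrix (Fin m) (Fin n) (MvPolynomial (Fin m × Fin n) k))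
    (hX : ∀ i j, X i j = MvPolynomial.X (i, j)) :
    (minors2 X).IsPrime :=
  minors2_generic_isPrime_general k m n X hX
end

section
/- Let $X_1,\dots,X_r$ be $r \ge 2$ matrices of distinct indeterminates, each of size $m \times n$, let $H$ be their horizontal concatenation (an $m \times rn$ matrix) and $V$ their vertical concatenation (an $rm \times n$ matrix). Then the toric double determinantal ideal $I = I_2(H) + I_2(V)$ is a prime ideal of the polynomial ring $R = k[x^{\ell}_{ij}]$ over a field $k$. -/
open MvPolynomial Sum

theorem AddMonoidAlgebra.ker_mapDomainRingHom_le {R M N : Type*} [Ring R] [AddMonoid M]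
    [AddMonoid N] (f : M →+ N) {I : Ideal (AddMonoidAlgebra R M)}
    (hI : ∀ a b, f a = f b → single a 1 - single b 1 ∈ I) :
    RingHom.ker (mapDomainRingHom R f) ≤ I := by
  intro x hx
  rw [RingHom.mem_ker, mapDomainRingHom_apply] at hx
  -- `x` is congruent to its image under the retraction `mapDomain (invFun f ∘ f)`, which kills `x`.
  have key : ∀ y, y - mapDomain (Function.invFun f) (mapDomain f y) ∈ I := by
    intro y
    induction y using AddMonoidAlgebra.induction_linear with
    | zero => simp [mapDomain_zero]
    | add y z hy hz =>
      simpa only [mapDomain_add, add_sub_add_comm] using I.add_mem hy hz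
    | single a c =>
      have h : f a = f (Function.invFun f (f a)) := (Function.invFun_eq ⟨a, rfl⟩).symm
      simpa [mapDomain_single, mul_sub] using I.mul_mem_left (single 0 c) (hI _ _ h)
  simpa [hx, mapDomain_zero] using key x

theorem MvPolynomial.prod_map_X_toMultiset {σ R : Type*} [CommSemiring R] (a : σ →₀ ℕ) :
    ((Finsupp.toMultiset a).map X).prod = monomial a (1 : R) := by
  simp [monic_monomial_eq, Finsupp.toMultiset_map, Finsupp.prod_toMultiset,
    Finsupp.prod_mapDomain_index, pow_add]

theorem mul_sub_mul_mem_minors2 {R α β : Type*} [CommRing R] (M : Matrix α β R) (i i' : α)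
    (j j' : β) : M i j * M i' j' - M i j' * M i' j ∈ minors2 M :=
  Ideal.subset_span ⟨i, i', j, j', rfl⟩

noncomputable section

namespace ToricDoubleDeterminantal

variable (R α β γ : Type*) [CommRing R]

def horizontal : Matrix β (α × γ) (MvPolynomial (α × β × γ) R) :=
  .of fun i q => X (q.1, i, q.2)

def vertical : Matrix (α × β) γ (MvPolynomial (α × β × γ) R) :=
  .of fun p j => X (p.1, p.2, j)

def ideal : Ideal (MvPolynomial (α × β × γ) R) :=
  minors2 (horizontal R α β γ) + minors2 (vertical R α β γ)

def marginals (L : Multiset (α × β × γ)) : Multiset (α ⊕ β ⊕ γ) :=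
  L.map (inl ·.1) + L.map (inr <| inl ·.2.1) + L.map (inr <| inr ·.2.2)

variable {R α β γ}

theorem marginals_cons (t : α × β × γ) (L : Multiset (α × β × γ)) :
    marginals α β γ (t ::ₘ L) =
      inl t.1 ::ₘ inr (inl t.2.1) ::ₘ inr (inr t.2.2) ::ₘ marginals α β γ L := by
  simp only [marginals, Multiset.map_cons, Multiset.cons_add, Multiset.add_cons]
  rw [Multiset.cons_swap (inr (inr _)), Multiset.cons_swap (inr (inr _)),
    Multiset.cons_swap (inr (inl _))]

theorem marginals_cons_inj_right {t : α × β × γ} {K L : Multiset (α × β × γ)} :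
    marginals α β γ (t ::ₘ K) = marginals α β γ (t ::ₘ L) ↔
      marginals α β γ K = marginals α β γ L := by
  simp only [marginals_cons, Multiset.cons_inj_right]

variable (R) in
def monomialClass (L : Multiset (α × β × γ)) : MvPolynomial (α × β × γ) R ⧸ ideal R α β γ :=
  Ideal.Quotient.mk _ (L.map X).prod

theorem monomialClass_cons (t : α × β × γ) (L : Multiset (α × β × γ)) :
    monomialClass R (t ::ₘ L) = Ideal.Quotient.mk _ (X t) * monomialClass R L := by
  simp [monomialClass]

theorem monomialClass_exchange_middle (l d : α) (b i : β) (c e : γ) (K : Multiset (α × β × γ)) :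
    monomialClass R ((l, b, c) ::ₘ (d, i, e) ::ₘ K) =
      monomialClass R ((l, i, c) ::ₘ (d, b, e) ::ₘ K) := by
  have h : X (l, b, c) * X (d, i, e) - X (d, b, e) * X (l, i, c) ∈ ideal R α β γ :=
    Ideal.mem_sup_left (mul_sub_mul_mem_minors2 (horizontal R α β γ) b i (l, c) (d, e))
  rw [mul_comm (X (d, b, e))] at h
  simp only [monomialClass_cons, ← mul_assoc, ← map_mul, Ideal.Quotient.eq.mpr h]

theorem monomialClass_exchange_last (l d : α) (i e : β) (c j : γ) (K : Multiset (α × β × γ)) :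
    monomialClass R ((l, i, c) ::ₘ (d, e, j) ::ₘ K) =
      monomialClass R ((l, i, j) ::ₘ (d, e, c) ::ₘ K) := by
  have h : X (l, i, c) * X (d, e, j) - X (l, i, j) * X (d, e, c) ∈ ideal R α β γ :=
    Ideal.mem_sup_right (mul_sub_mul_mem_minors2 (vertical R α β γ) (l, i) (d, e) c j)
  simp only [monomialClass_cons, ← mul_assoc, ← map_mul, Ideal.Quotient.eq.mpr h]

theorem inl_mem_marginals {l : α} {L : Multiset (α × β × γ)} :
    inl l ∈ marginals α β γ L ↔ ∃ b c, (l, b, c) ∈ L := by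
  simp [marginals]

theorem inr_inl_mem_marginals {i : β} {L : Multiset (α × β × γ)} :
    inr (inl i) ∈ marginals α β γ L ↔ ∃ a c, (a, i, c) ∈ L := by
  simp [marginals]

theorem inr_inr_mem_marginals {j : γ} {L : Multiset (α × β × γ)} :
    inr (inr j) ∈ marginals α β γ L ↔ ∃ a b, (a, b, j) ∈ L := by
  simp [marginals]

theorem exists_cons_fst_mid_of_mem_marginals {l : α} {i : β} {L : Multiset (α × β × γ)}
    (hl : inl l ∈ marginals α β γ L) (hi : inr (inl i) ∈ marginals α β γ L) :
    ∃ c K, marginals α β γ ((l, i, c) ::ₘ K) = marginals α β γ L ∧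
      monomialClass R ((l, i, c) ::ₘ K) = monomialClass R L := by
  classical
  obtain ⟨b, c, hlbc⟩ := inl_mem_marginals.1 hl
  obtain ⟨d, f, hdif⟩ := inr_inl_mem_marginals.1 hi
  by_cases hb : b = i
  · subst hb
    refine ⟨c, L.erase (l, b, c), ?_⟩
    rw [Multiset.cons_erase hlbc]
    exact ⟨rfl, rfl⟩
  have hne : (d, i, f) ≠ (l, b, c) := fun h => hb (congrArg (·.2.1) h).symm
  obtain ⟨K, rfl⟩ : ∃ K, L = (l, b, c) ::ₘ (d, i, f) ::ₘ K :=
    ⟨_, by rw [Multiset.cons_erase ((Multiset.mem_erase_of_ne hne).2 hdif),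
      Multiset.cons_erase hlbc]⟩
  refine ⟨c, (d, b, f) ::ₘ K, ?_, (monomialClass_exchange_middle l d b i c f K).symm⟩
  simp only [marginals, Multiset.map_cons, Multiset.cons_swap]

theorem exists_cons_of_mem_marginals {l : α} {i : β} {j : γ} {L : Multiset (α × β × γ)}
    (hl : inl l ∈ marginals α β γ L) (hi : inr (inl i) ∈ marginals α β γ L)
    (hj : inr (inr j) ∈ marginals α β γ L) :
    ∃ K, marginals α β γ ((l, i, j) ::ₘ K) = marginals α β γ L ∧
      monomialClass R ((l, i, j) ::ₘ K) = monomialClass R L := by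
  classical
  obtain ⟨c, K, hmarg, hclass⟩ := exists_cons_fst_mid_of_mem_marginals (R := R) hl hi
  by_cases hc : c = j
  · exact hc ▸ ⟨K, hmarg, hclass⟩
  rw [← hmarg, marginals_cons] at hj
  obtain ⟨d, e, hdej⟩ : ∃ d e, (d, e, j) ∈ K := by
    simpa [Ne.symm hc, inr_inr_mem_marginals] using hj
  obtain ⟨K', rfl⟩ : ∃ K', K = (d, e, j) ::ₘ K' := ⟨_, (Multiset.cons_erase hdej).symm⟩
  refine ⟨(d, e, c) ::ₘ K', ?_, ?_⟩
  · rw [← hmarg]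
    simp only [marginals, Multiset.map_cons, Multiset.cons_swap]
  · rw [← hclass, monomialClass_exchange_last]

theorem monomialClass_eq_of_marginals_eq {L L' : Multiset (α × β × γ)}
    (h : marginals α β γ L = marginals α β γ L') : monomialClass R L = monomialClass R L' := by
  induction L' using Multiset.induction_on generalizing L with
  | empty => simp_all [marginals]
  | cons t L' ih =>
    obtain ⟨l, i, j⟩ := t
    obtain ⟨K, hmarg, hclass⟩ := exists_cons_of_mem_marginals (R := R) (l := l) (i := i) (j := j)
      (by rw [h, marginals_cons]; simp) (by rw [h, marginals_cons]; simp)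
      (by rw [h, marginals_cons]; simp)
    rw [← hclass, monomialClass_cons, monomialClass_cons,
      ih (marginals_cons_inj_right.1 (hmarg.trans h))]

variable (α β γ) in
def exponent : ((α × β × γ) →₀ ℕ) →+ ((α ⊕ β ⊕ γ) →₀ ℕ) :=
  Finsupp.mapDomain.addMonoidHom (inl ·.1) + Finsupp.mapDomain.addMonoidHom (inr <| inl ·.2.1) +
    Finsupp.mapDomain.addMonoidHom (inr <| inr ·.2.2)

theorem toMultiset_exponent (a : (α × β × γ) →₀ ℕ) :
    Finsupp.toMultiset (exponent α β γ a) = marginals α β γ (Finsupp.toMultiset a) := by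
  simp [exponent, marginals, Finsupp.toMultiset_map]

theorem monomial_sub_monomial_mem {a b : (α × β × γ) →₀ ℕ}
    (h : exponent α β γ a = exponent α β γ b) :
    monomial a (1 : R) - monomial b 1 ∈ ideal R α β γ := by
  have hmarg :
      marginals α β γ (Finsupp.toMultiset a) = marginals α β γ (Finsupp.toMultiset b) := by
    rw [← toMultiset_exponent, h, toMultiset_exponent]
  have := monomialClass_eq_of_marginals_eq (R := R) hmarg
  rwa [monomialClass, monomialClass, Ideal.Quotient.eq, prod_map_X_toMultiset,
    prod_map_X_toMultiset] at this

variable (R α β γ) in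
def monomialMap : MvPolynomial (α × β × γ) R →+* MvPolynomial (α ⊕ β ⊕ γ) R :=
  AddMonoidAlgebra.mapDomainRingHom R (exponent α β γ)

theorem monomialMap_monomial (a : (α × β × γ) →₀ ℕ) (c : R) :
    monomialMap R α β γ (monomial a c) = monomial (exponent α β γ a) c :=
  AddMonoidAlgebra.mapDomain_single

theorem monomialMap_X (t : α × β × γ) :
    monomialMap R α β γ (X t) = X (inl t.1) * X (inr (inl t.2.1)) * X (inr (inr t.2.2)) := by
  simp [X, monomialMap_monomial, exponent, monomial_mul]

theorem ideal_le_ker : ideal R α β γ ≤ RingHom.ker (monomialMap R α β γ) := by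
  refine sup_le (Ideal.span_le.2 ?_) (Ideal.span_le.2 ?_) <;>
  · rintro _ ⟨i, i', j, j', rfl⟩
    simp only [SetLike.mem_coe, RingHom.mem_ker, map_sub, map_mul, horizontal, vertical,
      Matrix.of_apply, monomialMap_X]
    ring

theorem ker_le_ideal : RingHom.ker (monomialMap R α β γ) ≤ ideal R α β γ :=
  AddMonoidAlgebra.ker_mapDomainRingHom_le _ fun _ _ => monomial_sub_monomial_mem

theorem ideal_eq_ker : ideal R α β γ = RingHom.ker (monomialMap R α β γ) :=
  ideal_le_ker.antisymm ker_le_ideal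

theorem ideal_isPrime [IsDomain R] : (ideal R α β γ).IsPrime := by
  rw [ideal_eq_ker]
  exact RingHom.ker_isPrime _

end ToricDoubleDeterminantal

end

theorem toric_double_determinantal_isPrime_general (k : Type*) [Field k] (r m n : ℕ)
    (H : Matrix (Fin m) (Fin r × Fin n) (MvPolynomial (Fin r × Fin m × Fin n) k))
    (V : Matrix (Fin r × Fin m) (Fin n) (MvPolynomial (Fin r × Fin m × Fin n) k))
    (hH : ∀ i q, H i q = MvPolynomial.X (q.1, i, q.2))
    (hV : ∀ p j, V p j = MvPolynomial.X (p.1, p.2, j)) :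
    (minors2 H + minors2 V).IsPrime := by
  obtain rfl : H = ToricDoubleDeterminantal.horizontal k (Fin r) (Fin m) (Fin n) := Matrix.ext hH
  obtain rfl : V = ToricDoubleDeterminantal.vertical k (Fin r) (Fin m) (Fin n) := Matrix.ext hV
  exact ToricDoubleDeterminantal.ideal_isPrime

/-- The toric double determinantal ideal `I = I₂(H) + I₂(V)` is prime.  Here the
variables `x^ℓ_{ij}` are indexed by `Fin r × Fin m × Fin n`, `H` is the `m × rn`
horizontal concatenation of the `r` generic `m × n` matrices, and `V` is their
`rm × n` vertical concatenation. -/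
theorem toric_double_determinantal_isPrime (k : Type*) [Field k] (r m n : ℕ)
    (hr : 2 ≤ r) (hm : 2 ≤ m) (hn : 2 ≤ n)
    (H : Matrix (Fin m) (Fin r × Fin n) (MvPolynomial (Fin r × Fin m × Fin n) k))
    (V : Matrix (Fin r × Fin m) (Fin n) (MvPolynomial (Fin r × Fin m × Fin n) k))
    (hH : ∀ i q, H i q = MvPolynomial.X (q.1, i, q.2))
    (hV : ∀ p j, V p j = MvPolynomial.X (p.1, p.2, j)) :
    (minors2 H + minors2 V).IsPrime :=
  toric_double_determinantal_isPrime_general k r m n H V hH hV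
end

section
/- With $S = R/I$ the homogeneous coordinate ring of a toric double determinantal variety, for every variable $x^{\ell'}_{i'j'}$, the localization $S[1/x^{\ell'}_{i'j'}]$ is isomorphic as a $k$-algebra to $T[1/z^{\ell'}_{i'j'}]$, where $T$ is a polynomial ring over $k$ in the variables $z^{\ell}_{ij}$ indexed by those $(i,j,\ell)$ satisfying at least two of the conditions $i = i'$, $j = j'$, $\ell = \ell'$. -/
open MvPolynomial

namespace TDDAux

lemma mul_inv_sq_eq {M : Type*} [CommMonoid M] (u : Mˣ) {x y : M}
    (h : x = y * (u : M) ^ 2) : x * ((u⁻¹ : Mˣ) : M) ^ 2 = y := by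
  subst h
  rw [mul_assoc, ← mul_pow, Units.mul_inv, one_pow, mul_one]

variable {k : Type*} [Field k] {r m n : ℕ}

/-- The index type of `Y₁`. -/
abbrev Pred (v' v : Fin r × Fin m × Fin n) : Prop :=
  (v.2.1 = v'.2.1 ∧ v.2.2 = v'.2.2) ∨ (v.2.1 = v'.2.1 ∧ v.1 = v'.1) ∨
    (v.2.2 = v'.2.2 ∧ v.1 = v'.1)

def m1 (v' : Fin r × Fin m × Fin n) (l : Fin r) : {v : Fin r × Fin m × Fin n // Pred v' v} :=
  ⟨(l, v'.2.1, v'.2.2), Or.inl ⟨rfl, rfl⟩⟩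

def m2 (v' : Fin r × Fin m × Fin n) (j : Fin n) : {v : Fin r × Fin m × Fin n // Pred v' v} :=
  ⟨(v'.1, v'.2.1, j), Or.inr (Or.inl ⟨rfl, rfl⟩)⟩

def m3 (v' : Fin r × Fin m × Fin n) (i : Fin m) : {v : Fin r × Fin m × Fin n // Pred v' v} :=
  ⟨(v'.1, i, v'.2.2), Or.inr (Or.inr ⟨rfl, rfl⟩)⟩

variable (k)

/-- The distinguished variable `z'`. -/
noncomputable def zv (v' : Fin r × Fin m × Fin n) : MvPolynomial {v : Fin r × Fin m × Fin n // Pred v' v} k :=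
  X (m1 v' v'.1)

/-- `z'` as a unit of the localization away from itself. -/
noncomputable def uz (v' : Fin r × Fin m × Fin n) : (Localization.Away (zv k v'))ˣ :=
  Units.mkOfMulEqOne
    (algebraMap (MvPolynomial {v : Fin r × Fin m × Fin n // Pred v' v} k)
      (Localization.Away (zv k v')) (zv k v')) (IsLocalization.Away.invSelf (zv k v'))
    (IsLocalization.Away.mul_invSelf _)

lemma uz_val (v' : Fin r × Fin m × Fin n) :
    ((uz k v' : (Localization.Away (zv k v'))ˣ) : Localization.Away (zv k v')) =
      algebraMap _ _ (zv k v') := rfl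

/-- The image of the variable `x^l_{ij}` in `T[1/z']`. -/
noncomputable def wm (v' : Fin r × Fin m × Fin n) (l : Fin r) (i : Fin m) (j : Fin n) :
    Localization.Away (zv k v') :=
  algebraMap (MvPolynomial {v : Fin r × Fin m × Fin n // Pred v' v} k)
      (Localization.Away (zv k v')) (X (m3 v' i) * X (m1 v' l) * X (m2 v' j)) *
    (((uz k v')⁻¹ : _ˣ) : Localization.Away (zv k v')) ^ 2

lemma wm_swapH (v' : Fin r × Fin m × Fin n) (l l2 : Fin r) (i i2 : Fin m) (j j2 : Fin n) :
    wm k v' l i j * wm k v' l2 i2 j2 = wm k v' l2 i j2 * wm k v' l i2 j := by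
  simp only [wm, map_mul]
  ring

lemma wm_swapV (v' : Fin r × Fin m × Fin n) (l l2 : Fin r) (i i2 : Fin m) (j j2 : Fin n) :
    wm k v' l i j * wm k v' l2 i2 j2 = wm k v' l i j2 * wm k v' l2 i2 j := by
  simp only [wm, map_mul]
  ring

/-- The algebra map `R → T[1/z']`. -/
noncomputable def phi0 (v' : Fin r × Fin m × Fin n) :
    MvPolynomial (Fin r × Fin m × Fin n) k →ₐ[k] Localization.Away (zv k v') :=
  aeval fun v => wm k v' v.1 v.2.1 v.2.2

@[simp] lemma phi0_X (v' v : Fin r × Fin m × Fin n) :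
    phi0 k v' (X v) = wm k v' v.1 v.2.1 v.2.2 :=
  aeval_X _ _

lemma phi0_ker (v' : Fin r × Fin m × Fin n)
    (H : Matrix (Fin m) (Fin r × Fin n) (MvPolynomial (Fin r × Fin m × Fin n) k))
    (V : Matrix (Fin r × Fin m) (Fin n) (MvPolynomial (Fin r × Fin m × Fin n) k))
    (hH : ∀ i q, H i q = MvPolynomial.X (q.1, i, q.2))
    (hV : ∀ p j, V p j = MvPolynomial.X (p.1, p.2, j)) :
    ∀ a ∈ minors2 H + minors2 V, phi0 k v' a = 0 := by
  intro a ha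
  have hle : minors2 H + minors2 V ≤ RingHom.ker (phi0 k v').toRingHom := by
    refine sup_le (Ideal.span_le.mpr ?_) (Ideal.span_le.mpr ?_)
    · rintro p ⟨i, i2, q, q2, rfl⟩
      simp only [SetLike.mem_coe, RingHom.mem_ker, AlgHom.toRingHom_eq_coe,
        RingHom.coe_coe, hH, map_sub, map_mul, phi0_X]
      exact sub_eq_zero_of_eq (wm_swapH k v' q.1 q2.1 i i2 q.2 q2.2)
    · rintro p ⟨i, i2, q, q2, rfl⟩
      simp only [SetLike.mem_coe, RingHom.mem_ker, AlgHom.toRingHom_eq_coe,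
        RingHom.coe_coe, hV, map_sub, map_mul, phi0_X]
      exact sub_eq_zero_of_eq (wm_swapV k v' i.1 i2.1 i.2 i2.2 q q2)
  exact hle ha

/-- The induced map `S → T[1/z']`. -/
noncomputable def phi1 (v' : Fin r × Fin m × Fin n)
    (I : Ideal (MvPolynomial (Fin r × Fin m × Fin n) k))
    (hk : ∀ a ∈ I, phi0 k v' a = 0) :
    (MvPolynomial (Fin r × Fin m × Fin n) k ⧸ I) →ₐ[k] Localization.Away (zv k v') :=
  Ideal.Quotient.liftₐ I (phi0 k v') hk

@[simp] lemma phi1_mk (v' : Fin r × Fin m × Fin n) (I : Ideal _)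
    (hk : ∀ a ∈ I, phi0 k v' a = 0) (p : MvPolynomial (Fin r × Fin m × Fin n) k) :
    phi1 k v' I hk (Ideal.Quotient.mk I p) = phi0 k v' p := by
  simp only [phi1, Ideal.Quotient.liftₐ_apply]
  rfl

lemma phi1_X' (v' : Fin r × Fin m × Fin n) (I : Ideal _)
    (hk : ∀ a ∈ I, phi0 k v' a = 0) :
    phi1 k v' I hk (Ideal.Quotient.mk I (X v')) = ((uz k v' : _ˣ) : _) := by
  rw [phi1_mk, phi0_X]
  have e3 : m3 v' v'.2.1 = m1 v' v'.1 := Subtype.ext rfl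
  have e2 : m2 v' v'.2.2 = m1 v' v'.1 := Subtype.ext rfl
  rw [wm, e3, e2]
  refine mul_inv_sq_eq _ ?_
  rw [← zv, map_mul, map_mul, uz_val]
  ring

lemma phi1_unit (v' : Fin r × Fin m × Fin n) (I : Ideal _)
    (hk : ∀ a ∈ I, phi0 k v' a = 0)
    (y : Submonoid.powers (Ideal.Quotient.mk I (X v' : MvPolynomial (Fin r × Fin m × Fin n) k))) :
    IsUnit (phi1 k v' I hk y) := by
  obtain ⟨N, hN⟩ := y.prop
  have : phi1 k v' I hk y = ((uz k v' : _ˣ) : _) ^ N := by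
    rw [← hN, map_pow, phi1_X']
  rw [this, ← Units.val_pow_eq_pow_val]
  exact Units.isUnit _

/-- The induced map `S[1/x'] → T[1/z']`. -/
noncomputable def Phi (v' : Fin r × Fin m × Fin n) (I : Ideal _)
    (hk : ∀ a ∈ I, phi0 k v' a = 0) :
    Localization.Away (Ideal.Quotient.mk I (X v' : MvPolynomial (Fin r × Fin m × Fin n) k))
      →ₐ[k] Localization.Away (zv k v') :=
  IsLocalization.liftAlgHom (f := phi1 k v' I hk) (phi1_unit k v' I hk)

lemma Phi_algebraMap (v' : Fin r × Fin m × Fin n) (I : Ideal _)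
    (hk : ∀ a ∈ I, phi0 k v' a = 0) (s : MvPolynomial (Fin r × Fin m × Fin n) k ⧸ I) :
    Phi k v' I hk (algebraMap _ _ s) = phi1 k v' I hk s := by
  rw [Phi, IsLocalization.liftAlgHom_apply, IsLocalization.lift_eq]
  rfl

/-- The algebra map `T → S[1/x']`. -/
noncomputable def psi0 (v' : Fin r × Fin m × Fin n)
    (I : Ideal (MvPolynomial (Fin r × Fin m × Fin n) k)) :
    MvPolynomial {v : Fin r × Fin m × Fin n // Pred v' v} k →ₐ[k]
      Localization.Away (Ideal.Quotient.mk I (X v')) :=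
  aeval fun s : {v : Fin r × Fin m × Fin n // Pred v' v} =>
    algebraMap (MvPolynomial (Fin r × Fin m × Fin n) k ⧸ I)
      (Localization.Away (Ideal.Quotient.mk I (X v'))) (Ideal.Quotient.mk I (X s.val))

@[simp] lemma psi0_X (v' : Fin r × Fin m × Fin n) (I : Ideal _)
    (s : {v : Fin r × Fin m × Fin n // Pred v' v}) :
    psi0 k v' I (X s) = algebraMap _ _ (Ideal.Quotient.mk I (X s.val)) := by
  simp [psi0]

/-- `x'` as a unit of `S[1/x']`. -/
noncomputable def ux (v' : Fin r × Fin m × Fin n) (I : Ideal _) :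
    (Localization.Away (Ideal.Quotient.mk I (X v' : MvPolynomial (Fin r × Fin m × Fin n) k)))ˣ :=
  Units.mkOfMulEqOne (algebraMap _ _ (Ideal.Quotient.mk I (X v')))
    (IsLocalization.Away.invSelf _) (IsLocalization.Away.mul_invSelf _)

lemma ux_val (v' : Fin r × Fin m × Fin n) (I : Ideal _) :
    ((ux k v' I : _ˣ) : Localization.Away (Ideal.Quotient.mk I (X v'))) =
      algebraMap _ _ (Ideal.Quotient.mk I (X v')) := rfl

lemma psi0_z (v' : Fin r × Fin m × Fin n) (I : Ideal _) :
    psi0 k v' I (zv k v') = ((ux k v' I : _ˣ) : _) := by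
  rw [zv, psi0_X, ux_val]
  rfl

lemma psi0_unit (v' : Fin r × Fin m × Fin n) (I : Ideal _)
    (y : Submonoid.powers (zv k v')) : IsUnit (psi0 k v' I y) := by
  obtain ⟨N, hN⟩ := y.prop
  have : psi0 k v' I y = ((ux k v' I : _ˣ) : _) ^ N := by
    rw [← hN, map_pow, psi0_z]
  rw [this, ← Units.val_pow_eq_pow_val]
  exact Units.isUnit _

/-- The induced map `T[1/z'] → S[1/x']`. -/
noncomputable def Psi (v' : Fin r × Fin m × Fin n) (I : Ideal _) :
    Localization.Away (zv k v') →ₐ[k]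
      Localization.Away (Ideal.Quotient.mk I (X v' : MvPolynomial (Fin r × Fin m × Fin n) k)) :=
  IsLocalization.liftAlgHom (f := psi0 k v' I) (psi0_unit k v' I)

lemma Psi_algebraMap (v' : Fin r × Fin m × Fin n) (I : Ideal _)
    (b : MvPolynomial {v : Fin r × Fin m × Fin n // Pred v' v} k) :
    Psi k v' I (algebraMap _ _ b) = psi0 k v' I b := by
  rw [Psi, IsLocalization.liftAlgHom_apply, IsLocalization.lift_eq]
  rfl

lemma Psi_inv_uz (v' : Fin r × Fin m × Fin n) (I : Ideal _) :
    Psi k v' I (((uz k v')⁻¹ : _ˣ) : _) = ((ux k v' I)⁻¹ : _ˣ) := by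
  have h2 : Units.map (Psi k v' I).toRingHom.toMonoidHom (uz k v') = ux k v' I := by
    refine Units.ext ?_
    simpa [uz_val] using (Psi_algebraMap k v' I (zv k v')).trans (psi0_z k v' I)
  calc Psi k v' I (((uz k v')⁻¹ : _ˣ) : _)
      = ((Units.map (Psi k v' I).toRingHom.toMonoidHom ((uz k v')⁻¹) : _ˣ) : _) := rfl
    _ = (((Units.map (Psi k v' I).toRingHom.toMonoidHom (uz k v'))⁻¹ : _ˣ) : _) := by
        rw [map_inv]
    _ = ((ux k v' I)⁻¹ : _ˣ) := by rw [h2]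

lemma keyI (v' v : Fin r × Fin m × Fin n)
    (H : Matrix (Fin m) (Fin r × Fin n) (MvPolynomial (Fin r × Fin m × Fin n) k))
    (V : Matrix (Fin r × Fin m) (Fin n) (MvPolynomial (Fin r × Fin m × Fin n) k))
    (hH : ∀ i q, H i q = MvPolynomial.X (q.1, i, q.2))
    (hV : ∀ p j, V p j = MvPolynomial.X (p.1, p.2, j)) :
    (X v * X v' ^ 2 -
        X ((v'.1, v.2.1, v'.2.2) : Fin r × Fin m × Fin n) * X (v.1, v'.2.1, v'.2.2) *
          X (v'.1, v'.2.1, v.2.2) :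
        MvPolynomial (Fin r × Fin m × Fin n) k) ∈ minors2 H + minors2 V := by
  have h1 : (X v * X v' -
      X ((v'.1, v.2.1, v'.2.2) : Fin r × Fin m × Fin n) * X (v.1, v'.2.1, v.2.2) :
      MvPolynomial (Fin r × Fin m × Fin n) k) ∈ minors2 H := by
    apply Ideal.subset_span
    refine ⟨v.2.1, v'.2.1, (v.1, v.2.2), (v'.1, v'.2.2), ?_⟩
    simp only [hH]
  have h2 : (X ((v.1, v'.2.1, v.2.2) : Fin r × Fin m × Fin n) * X v' -
      X ((v.1, v'.2.1, v'.2.2) : Fin r × Fin m × Fin n) * X (v'.1, v'.2.1, v.2.2) :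
      MvPolynomial (Fin r × Fin m × Fin n) k) ∈ minors2 V := by
    apply Ideal.subset_span
    refine ⟨(v.1, v'.2.1), (v'.1, v'.2.1), v.2.2, v'.2.2, ?_⟩
    simp only [hV]
  have hc : (X v * X v' ^ 2 -
      X ((v'.1, v.2.1, v'.2.2) : Fin r × Fin m × Fin n) * X (v.1, v'.2.1, v'.2.2) *
        X (v'.1, v'.2.1, v.2.2) :
      MvPolynomial (Fin r × Fin m × Fin n) k) =
      X v' * (X v * X v' -
          X ((v'.1, v.2.1, v'.2.2) : Fin r × Fin m × Fin n) * X (v.1, v'.2.1, v.2.2)) +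
        X ((v'.1, v.2.1, v'.2.2) : Fin r × Fin m × Fin n) *
          (X ((v.1, v'.2.1, v.2.2) : Fin r × Fin m × Fin n) * X v' -
            X ((v.1, v'.2.1, v'.2.2) : Fin r × Fin m × Fin n) * X (v'.1, v'.2.1, v.2.2)) := by
    ring
  rw [hc]
  exact Ideal.add_mem _ (Ideal.mul_mem_left _ _ (Submodule.mem_sup_left h1))
    (Ideal.mul_mem_left _ _ (Submodule.mem_sup_right h2))

lemma PsiPhi_X (v' v : Fin r × Fin m × Fin n)
    (H : Matrix (Fin m) (Fin r × Fin n) (MvPolynomial (Fin r × Fin m × Fin n) k))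
    (V : Matrix (Fin r × Fin m) (Fin n) (MvPolynomial (Fin r × Fin m × Fin n) k))
    (hH : ∀ i q, H i q = MvPolynomial.X (q.1, i, q.2))
    (hV : ∀ p j, V p j = MvPolynomial.X (p.1, p.2, j)) :
    Psi k v' (minors2 H + minors2 V)
        (Phi k v' (minors2 H + minors2 V) (phi0_ker k v' H V hH hV)
          (algebraMap _ _ (Ideal.Quotient.mk (minors2 H + minors2 V) (X v)))) =
      algebraMap _ _ (Ideal.Quotient.mk (minors2 H + minors2 V) (X v)) := by
  rw [Phi_algebraMap, phi1_mk, phi0_X, wm, map_mul, map_pow, Psi_inv_uz, Psi_algebraMap]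
  simp only [map_mul, psi0_X]
  rw [show ((m3 v' v.2.1 : {v : Fin r × Fin m × Fin n // Pred v' v}) :
        Fin r × Fin m × Fin n) = (v'.1, v.2.1, v'.2.2) from rfl,
    show ((m1 v' v.1 : {v : Fin r × Fin m × Fin n // Pred v' v}) :
        Fin r × Fin m × Fin n) = (v.1, v'.2.1, v'.2.2) from rfl,
    show ((m2 v' v.2.2 : {v : Fin r × Fin m × Fin n // Pred v' v}) :
        Fin r × Fin m × Fin n) = (v'.1, v'.2.1, v.2.2) from rfl]
  refine mul_inv_sq_eq _ ?_
  rw [ux_val]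
  simp only [← map_mul, ← map_pow]
  congr 1
  rw [Ideal.Quotient.eq]
  have hk := keyI k v' v H V hH hV
  have hne : (X ((v'.1, v.2.1, v'.2.2) : Fin r × Fin m × Fin n) * X (v.1, v'.2.1, v'.2.2) *
        X (v'.1, v'.2.1, v.2.2) -
      X v * X v' ^ 2 : MvPolynomial (Fin r × Fin m × Fin n) k) =
      -(X v * X v' ^ 2 -
        X ((v'.1, v.2.1, v'.2.2) : Fin r × Fin m × Fin n) * X (v.1, v'.2.1, v'.2.2) *
          X (v'.1, v'.2.1, v.2.2)) := by
    ring
  rw [hne]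
  exact neg_mem hk

lemma wm_Y (v' : Fin r × Fin m × Fin n) (s : {v : Fin r × Fin m × Fin n // Pred v' v}) :
    wm k v' s.val.1 s.val.2.1 s.val.2.2 =
      algebraMap (MvPolynomial {v : Fin r × Fin m × Fin n // Pred v' v} k)
        (Localization.Away (zv k v')) (X s) := by
  rcases s.prop with ⟨h1, h2⟩ | ⟨h1, h2⟩ | ⟨h1, h2⟩
  · have e3 : m3 v' s.val.2.1 = m1 v' v'.1 :=
      Subtype.ext (show ((v'.1, s.val.2.1, v'.2.2) : Fin r × Fin m × Fin n) =
        (v'.1, v'.2.1, v'.2.2) by rw [h1])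
    have e1 : m1 v' s.val.1 = s :=
      Subtype.ext (show ((s.val.1, v'.2.1, v'.2.2) : Fin r × Fin m × Fin n) = s.val by
        rw [← h1, ← h2])
    have e2 : m2 v' s.val.2.2 = m1 v' v'.1 :=
      Subtype.ext (show ((v'.1, v'.2.1, s.val.2.2) : Fin r × Fin m × Fin n) =
        (v'.1, v'.2.1, v'.2.2) by rw [h2])
    rw [wm, e3, e1, e2, ← zv]
    refine mul_inv_sq_eq _ ?_
    rw [map_mul, map_mul, uz_val]
    ring
  · have e3 : m3 v' s.val.2.1 = m1 v' v'.1 :=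
      Subtype.ext (show ((v'.1, s.val.2.1, v'.2.2) : Fin r × Fin m × Fin n) =
        (v'.1, v'.2.1, v'.2.2) by rw [h1])
    have e1 : m1 v' s.val.1 = m1 v' v'.1 :=
      Subtype.ext (show ((s.val.1, v'.2.1, v'.2.2) : Fin r × Fin m × Fin n) =
        (v'.1, v'.2.1, v'.2.2) by rw [h2])
    have e2 : m2 v' s.val.2.2 = s :=
      Subtype.ext (show ((v'.1, v'.2.1, s.val.2.2) : Fin r × Fin m × Fin n) = s.val by
        rw [← h1, ← h2])
    rw [wm, e3, e1, e2, ← zv]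
    refine mul_inv_sq_eq _ ?_
    rw [map_mul, map_mul, uz_val]
    ring
  · have e3 : m3 v' s.val.2.1 = s :=
      Subtype.ext (show ((v'.1, s.val.2.1, v'.2.2) : Fin r × Fin m × Fin n) = s.val by
        rw [← h1, ← h2])
    have e1 : m1 v' s.val.1 = m1 v' v'.1 :=
      Subtype.ext (show ((s.val.1, v'.2.1, v'.2.2) : Fin r × Fin m × Fin n) =
        (v'.1, v'.2.1, v'.2.2) by rw [h2])
    have e2 : m2 v' s.val.2.2 = m1 v' v'.1 :=
      Subtype.ext (show ((v'.1, v'.2.1, s.val.2.2) : Fin r × Fin m × Fin n) =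
        (v'.1, v'.2.1, v'.2.2) by rw [h1])
    rw [wm, e3, e1, e2, ← zv]
    refine mul_inv_sq_eq _ ?_
    rw [map_mul, map_mul, uz_val]
    ring

lemma PhiPsi_X (v' : Fin r × Fin m × Fin n)
    (I : Ideal (MvPolynomial (Fin r × Fin m × Fin n) k))
    (hk : ∀ a ∈ I, phi0 k v' a = 0) (s : {v : Fin r × Fin m × Fin n // Pred v' v}) :
    Phi k v' I hk (Psi k v' I
        (algebraMap (MvPolynomial {v : Fin r × Fin m × Fin n // Pred v' v} k)
          (Localization.Away (zv k v')) (X s))) =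
      algebraMap (MvPolynomial {v : Fin r × Fin m × Fin n // Pred v' v} k)
        (Localization.Away (zv k v')) (X s) := by
  rw [Psi_algebraMap, psi0_X, Phi_algebraMap, phi1_mk, phi0_X, wm_Y]

end TDDAux

/-- With `S = R/I` the homogeneous coordinate ring of a toric double determinantal
variety, for every variable `x^{ℓ'}_{i'j'}` the localization `S[1/x^{ℓ'}_{i'j'}]` is
isomorphic as a `k`-algebra to `T[1/z^{ℓ'}_{i'j'}]`, where `T` is the polynomial ring in
the variables `z^ℓ_{ij}` indexed by the triples `(ℓ,i,j)` satisfying at least two of the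
conditions `i = i'`, `j = j'`, `ℓ = ℓ'`. -/
theorem localization_iso_polynomial_localization (k : Type*) [Field k] (r m n : ℕ)
    (hr : 2 ≤ r) (hm : 2 ≤ m) (hn : 2 ≤ n)
    (H : Matrix (Fin m) (Fin r × Fin n) (MvPolynomial (Fin r × Fin m × Fin n) k))
    (V : Matrix (Fin r × Fin m) (Fin n) (MvPolynomial (Fin r × Fin m × Fin n) k))
    (hH : ∀ i q, H i q = MvPolynomial.X (q.1, i, q.2))
    (hV : ∀ p j, V p j = MvPolynomial.X (p.1, p.2, j))
    (v' : Fin r × Fin m × Fin n) :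
    Nonempty
      ((Localization.Away
          (Ideal.Quotient.mk (minors2 H + minors2 V) (MvPolynomial.X v'))) ≃ₐ[k]
        (Localization.Away
          (MvPolynomial.X
            (⟨v', Or.inl ⟨rfl, rfl⟩⟩ :
              {v : Fin r × Fin m × Fin n //
                (v.2.1 = v'.2.1 ∧ v.2.2 = v'.2.2) ∨ (v.2.1 = v'.2.1 ∧ v.1 = v'.1) ∨
                  (v.2.2 = v'.2.2 ∧ v.1 = v'.1)}) :
            MvPolynomial
              {v : Fin r × Fin m × Fin n //
                (v.2.1 = v'.2.1 ∧ v.2.2 = v'.2.2) ∨ (v.2.1 = v'.2.1 ∧ v.1 = v'.1) ∨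
                  (v.2.2 = v'.2.2 ∧ v.1 = v'.1)} k))) := by
  classical
  refine ⟨?_⟩
  show Localization.Away
      (Ideal.Quotient.mk (minors2 H + minors2 V) (MvPolynomial.X v')) ≃ₐ[k]
    Localization.Away (TDDAux.zv k v')
  refine AlgEquiv.ofAlgHom
    (TDDAux.Phi k v' (minors2 H + minors2 V) (TDDAux.phi0_ker k v' H V hH hV))
    (TDDAux.Psi k v' (minors2 H + minors2 V)) ?_ ?_
  · have hcomp :
        ((TDDAux.Phi k v' (minors2 H + minors2 V)
              (TDDAux.phi0_ker k v' H V hH hV)).comp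
            (TDDAux.Psi k v' (minors2 H + minors2 V))).comp
          (IsScalarTower.toAlgHom k
            (MvPolynomial {v : Fin r × Fin m × Fin n // TDDAux.Pred v' v} k)
            (Localization.Away (TDDAux.zv k v'))) =
          IsScalarTower.toAlgHom k _ _ :=
      MvPolynomial.algHom_ext fun s => TDDAux.PhiPsi_X k v' _ _ s
    apply AlgHom.coe_ringHom_injective
    refine IsLocalization.ringHom_ext (Submonoid.powers (TDDAux.zv k v')) ?_
    exact RingHom.ext fun b => AlgHom.congr_fun hcomp b
  · have hcomp :
        (((TDDAux.Psi k v' (minors2 H + minors2 V)).comp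
              (TDDAux.Phi k v' (minors2 H + minors2 V)
                (TDDAux.phi0_ker k v' H V hH hV))).comp
            (IsScalarTower.toAlgHom k _
              (Localization.Away
                (Ideal.Quotient.mk (minors2 H + minors2 V) (X v'))))).comp
          (Ideal.Quotient.mkₐ k (minors2 H + minors2 V)) =
          (IsScalarTower.toAlgHom k _ _).comp
            (Ideal.Quotient.mkₐ k (minors2 H + minors2 V)) :=
      MvPolynomial.algHom_ext fun v => TDDAux.PsiPhi_X k v' v H V hH hV
    apply AlgHom.coe_ringHom_injective
    refine IsLocalization.ringHom_ext
      (Submonoid.powers (Ideal.Quotient.mk (minors2 H + minors2 V) (X v'))) ?_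
    refine RingHom.ext fun s => ?_
    obtain ⟨p, rfl⟩ := Ideal.Quotient.mk_surjective s
    exact AlgHom.congr_fun hcomp p
end

section
/- If a $b\times b$ submatrix $M$ of a matrix over a commutative ring has two of its rows contained in a submatrix $Z$ all of whose $2\times 2$ minors lie in an ideal $J$, then $\det(M) \in J$. More precisely: if $M$ is a $b \times b$ matrix with $b \ge 2$ and all $2\times 2$ minors formed from two fixed rows of $M$ lie in an ideal $J$, then $\det(M) \in J$ (by Laplace/generalized Laplace expansion along those two rows). -/
/-!
Expanding `det M` along rows `p` and `q` gives `∑ k l, M p k * M q l * D k l`, where `D k l` is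
the determinant with rows `p, q` replaced by the unit vectors `e k, e l`. Since `D` is alternating,
the diagonal terms vanish and the terms for `(k, l)` and `(l, k)` combine to the `2 × 2` minor
`M p k * M q l - M p l * M q k` times `D k l`.
-/

open Matrix

theorem Finset.sum_sum_mem_of_add_swap_mem {ι M S : Type*} [AddCommMonoid M] [SetLike S M]
    [AddSubmonoidClass S M] {t : S} (s : Finset ι) {f : ι → ι → M}
    (hdiag : ∀ i ∈ s, f i i ∈ t) (hswap : ∀ i ∈ s, ∀ j ∈ s, f i j + f j i ∈ t) :
    ∑ i ∈ s, ∑ j ∈ s, f i j ∈ t := by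
  classical
  induction s using Finset.induction_on with
  | empty => simp
  | @insert k s hk ih =>
    have hsplit : ∑ i ∈ insert k s, ∑ j ∈ insert k s, f i j
        = f k k + ∑ j ∈ s, (f k j + f j k) + ∑ i ∈ s, ∑ j ∈ s, f i j := by
      simp only [Finset.sum_insert hk, Finset.sum_add_distrib]
      abel
    rw [hsplit]
    refine add_mem (add_mem (hdiag k (mem_insert_self k s)) (sum_mem fun j hj => ?_))
      (ih (fun i hi => hdiag i (mem_insert_of_mem hi))
        fun i hi j hj => hswap i (mem_insert_of_mem hi) j (mem_insert_of_mem hj))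
    exact hswap k (mem_insert_self k s) j (mem_insert_of_mem hj)

namespace Matrix

variable {R n : Type*} [CommRing R] [Fintype n] [DecidableEq n]

theorem det_updateRow_updateRow_swap (A : Matrix n n R) {i j : n} (hij : i ≠ j)
    (u v : n → R) :
    ((A.updateRow i v).updateRow j u).det = -((A.updateRow i u).updateRow j v).det := by
  have hperm : (A.updateRow i v).updateRow j u
      = ((A.updateRow i u).updateRow j v).submatrix (Equiv.swap i j) id := by
    ext k l
    rcases eq_or_ne k i with rfl | hki
    · simp [hij]
    rcases eq_or_ne k j with rfl | hkj
    · simp [hij]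
    · simp [hki, hkj, Equiv.swap_apply_of_ne_of_ne hki hkj]
  rw [hperm, det_permute, Equiv.Perm.sign_swap hij]
  simp

theorem det_eq_sum_mul_det_updateRow_single (A : Matrix n n R) (i : n) :
    A.det = ∑ j, A i j * (A.updateRow i (Pi.single j 1)).det := by
  simp only [det_eq_sum_mul_adjugate_row A i, adjugate_apply]

theorem det_eq_sum_sum_mul_det_updateRow_updateRow_single (A : Matrix n n R) {i j : n}
    (hij : i ≠ j) :
    A.det = ∑ k, ∑ l, A i k * A j l *
      ((A.updateRow i (Pi.single k 1)).updateRow j (Pi.single l 1)).det := by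
  rw [det_eq_sum_mul_det_updateRow_single A i]
  refine Finset.sum_congr rfl fun k _ => ?_
  rw [det_eq_sum_mul_det_updateRow_single _ j, Finset.mul_sum]
  simp only [updateRow_ne hij.symm, mul_assoc]

end Matrix

theorem det_mem_of_two_rows_minors_mem_general {R : Type*} [CommRing R] (J : Ideal R) (b : ℕ)
    (M : Matrix (Fin b) (Fin b) R) (p q : Fin b) (hpq : p ≠ q)
    (h : ∀ j j' : Fin b, M p j * M q j' - M p j' * M q j ∈ J) :
    M.det ∈ J := by
  rw [det_eq_sum_sum_mul_det_updateRow_updateRow_single M hpq]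
  refine Finset.sum_sum_mem_of_add_swap_mem _ (fun k _ => ?_) fun k _ l _ => ?_
  · rw [det_zero_of_row_eq hpq (by simp [updateRow_ne hpq]), mul_zero]
    exact J.zero_mem
  · rw [det_updateRow_updateRow_swap M hpq (Pi.single k 1) (Pi.single l 1)]
    set D := ((M.updateRow p (Pi.single k 1)).updateRow q (Pi.single l 1)).det
    convert J.mul_mem_right D (h k l) using 1
    ring

/-- If `M` is a `b × b` matrix (`b ≥ 2`) over a commutative ring and every `2 × 2` minor
formed from two fixed distinct rows `p, q` of `M` lies in an ideal `J`, then
`det M ∈ J` (by generalized Laplace expansion along those two rows). -/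
theorem det_mem_of_two_rows_minors_mem {R : Type*} [CommRing R] (J : Ideal R) (b : ℕ)
    (hb : 2 ≤ b) (M : Matrix (Fin b) (Fin b) R) (p q : Fin b) (hpq : p ≠ q)
    (h : ∀ j j' : Fin b, M p j * M q j' - M p j' * M q j ∈ J) :
    M.det ∈ J :=
  det_mem_of_two_rows_minors_mem_general J b M p q hpq h
end

section
/- In the homogeneous coordinate ring $S = R/I$ of a toric double determinantal variety, for variables with $i \ne i'$, $j \ne j'$, $\ell \ne \ell'$, the identity $x^{\ell}_{ij}(x^{\ell'}_{i'j'})^2 = x^{\ell'}_{i'j}\, x^{\ell'}_{ij'}\, x^{\ell}_{i'j'}$ holds; equivalently, in $R$, $x^{\ell}_{ij}(x^{\ell'}_{i'j'})^2 - x^{\ell'}_{i'j} x^{\ell'}_{ij'} x^{\ell}_{i'j'} = x^{\ell'}_{i'j'}(x^{\ell'}_{i'j'}x^{\ell}_{ij} - x^{\ell}_{i'j}x^{\ell'}_{ij'}) + x^{\ell'}_{ij'}(x^{\ell'}_{i'j'}x^{\ell}_{i'j} - x^{\ell}_{i'j'}x^{\ell'}_{i'j})$, and both terms on the right lie in $I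 = I_2(H)+I_2(V)$. -/
/-- For variables with `i ≠ i'`, `j ≠ j'`, `ℓ ≠ ℓ'` one has, in the polynomial ring `R`,
`x^ℓ_{ij}(x^{ℓ'}_{i'j'})² − x^{ℓ'}_{i'j} x^{ℓ'}_{ij'} x^ℓ_{i'j'}
  = x^{ℓ'}_{i'j'}(x^{ℓ'}_{i'j'}x^ℓ_{ij} − x^ℓ_{i'j}x^{ℓ'}_{ij'})
    + x^{ℓ'}_{ij'}(x^{ℓ'}_{i'j'}x^ℓ_{i'j} − x^ℓ_{i'j'}x^{ℓ'}_{i'j})`,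
both terms on the right lie in `I = I₂(H) + I₂(V)`, and hence in `S = R/I` the identity
`x^ℓ_{ij}(x^{ℓ'}_{i'j'})² = x^{ℓ'}_{i'j} x^{ℓ'}_{ij'} x^ℓ_{i'j'}` holds. -/
theorem toric_double_determinantal_Y3_identity (k : Type*) [Field k] (r m n : ℕ)
    (hr : 2 ≤ r) (hm : 2 ≤ m) (hn : 2 ≤ n)
    (H : Matrix (Fin m) (Fin r × Fin n) (MvPolynomial (Fin r × Fin m × Fin n) k))
    (V : Matrix (Fin r × Fin m) (Fin n) (MvPolynomial (Fin r × Fin m × Fin n) k))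
    (hH : ∀ i q, H i q = MvPolynomial.X (q.1, i, q.2))
    (hV : ∀ p j, V p j = MvPolynomial.X (p.1, p.2, j))
    (x : Fin r → Fin m → Fin n → MvPolynomial (Fin r × Fin m × Fin n) k)
    (hx : ∀ l i j, x l i j = MvPolynomial.X (l, i, j))
    (i i' : Fin m) (j j' : Fin n) (l l' : Fin r)
    (hii : i ≠ i') (hjj : j ≠ j') (hll : l ≠ l') :
    x l i j * (x l' i' j') ^ 2 - x l' i' j * x l' i j' * x l i' j' =
        x l' i' j' * (x l' i' j' * x l i j - x l i' j * x l' i j') +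
          x l' i j' * (x l' i' j' * x l i' j - x l i' j' * x l' i' j) ∧
      x l' i' j' * (x l' i' j' * x l i j - x l i' j * x l' i j') ∈
        minors2 H + minors2 V ∧
      x l' i j' * (x l' i' j' * x l i' j - x l i' j' * x l' i' j) ∈
        minors2 H + minors2 V ∧
      Ideal.Quotient.mk (minors2 H + minors2 V) (x l i j * (x l' i' j') ^ 2) =
        Ideal.Quotient.mk (minors2 H + minors2 V) (x l' i' j * x l' i j' * x l i' j') := by
  have h1 : (x l' i' j' * x l i j - x l i' j * x l' i j') ∈ minors2 H := by
    apply Ideal.subset_span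
    exact ⟨i, i', (l, j), (l', j'), by simp only [hH, hx]; ring⟩
  have h2 : (x l' i' j' * x l i' j - x l i' j' * x l' i' j) ∈ minors2 V := by
    apply Ideal.subset_span
    exact ⟨(l', i'), (l, i'), j', j, by simp only [hV, hx]; ring⟩
  have heq : x l i j * (x l' i' j') ^ 2 - x l' i' j * x l' i j' * x l i' j' =
      x l' i' j' * (x l' i' j' * x l i j - x l i' j * x l' i j') +
        x l' i j' * (x l' i' j' * x l i' j - x l i' j' * x l' i' j) := by ring
  have m1 : x l' i' j' * (x l' i' j' * x l i j - x l i' j * x l' i j') ∈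
      minors2 H + minors2 V := Ideal.mul_mem_left _ _ (Submodule.mem_sup_left h1)
  have m2 : x l' i j' * (x l' i' j' * x l i' j - x l i' j' * x l' i' j) ∈
      minors2 H + minors2 V := Ideal.mul_mem_left _ _ (Submodule.mem_sup_right h2)
  refine ⟨heq, m1, m2, ?_⟩
  rw [Ideal.Quotient.eq, heq]
  exact add_mem m1 m2
end
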